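/- arXiv:1409.0421 — 7 statements merged into one kernel-verified Lean document; each statement's English description precedes it below -/
import Mathlib

section
/- Let f be a permutation of {0,1}^n and let P = LR[f] ∘ LR[f] be the 2-round Luby-Rackoff permutation of {0,1}^{2n}. Then P is a balanced permutation, i.e., the map ω ↦ ω ⊕ P(ω) is a bijection of {0,1}^{2n}. -/
def LR {n : ℕ} (f : (Fin n → ZMod 2) → (Fin n → ZMod 2)) :
    ((Fin n → ZMod 2) × (Fin n → ZMod 2)) → ((Fin n → ZMod 2) × (Fin n → ZMod 2)) :=
  fun ω => (ω.2, ω.1 + f ω.2)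

theorem stmt_3 (n : ℕ) (f : (Fin n → ZMod 2) → (Fin n → ZMod 2))
    (hf : Function.Bijective f) :
    Function.Bijective (fun ω => ω + (LR f ∘ LR f) ω) := by
  have hself : ∀ x : Fin n → ZMod 2, x + x = 0 := fun x => funext fun i => CharTwo.add_self_eq_zero (x i)
  have key : (fun ω => ω + (LR f ∘ LR f) ω)
      = fun ω : (Fin n → ZMod 2) × (Fin n → ZMod 2) => (f ω.2, f (ω.1 + f ω.2)) := by
    funext ω
    simp only [LR, Function.comp, Prod.ext_iff, Prod.fst_add, Prod.snd_add]
    constructor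
    · show ω.1 + (ω.1 + f ω.2) = _
      rw [← add_assoc, hself, zero_add]
    · show ω.2 + (ω.2 + f (ω.1 + f ω.2)) = _
      rw [← add_assoc, hself, zero_add]
  rw [key]
  constructor
  · rintro ⟨a, b⟩ ⟨c, d⟩ h
    simp only [Prod.ext_iff] at h
    have hbd : b = d := hf.1 h.1
    have h2 : a + f b = c + f d := hf.1 h.2
    rw [hbd] at h2
    exact Prod.ext (add_right_cancel h2) hbd
  · rintro ⟨u, v⟩
    obtain ⟨b, hb⟩ := hf.2 u
    obtain ⟨w, hw⟩ := hf.2 v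
    exact ⟨(w + f b, b), by simp [add_assoc, hself, hb, hw]⟩
end

section
/- Let f : {0,1}^n → {0,1}^n be any function and K = (K_L, K_R) ∈ {0,1}^{2n}. Then for all ω ∈ {0,1}^{2n}, (LR[f] ∘ LR[f])(ω ⊕ K) = (LR[f^{⊕(K_L ⊕ K_R)}] ∘ LR[f^{⊕ K_R}])(ω) ⊕ (K_L ⊕ K_R, K_L). -/
def conjKey {n : ℕ} (f : (Fin n → ZMod 2) → (Fin n → ZMod 2)) (c : Fin n → ZMod 2) :
    (Fin n → ZMod 2) → (Fin n → ZMod 2) :=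
  fun x => f (x + c) + c

theorem stmt_6 (n : ℕ) (f : (Fin n → ZMod 2) → (Fin n → ZMod 2))
    (K : (Fin n → ZMod 2) × (Fin n → ZMod 2))
    (ω : (Fin n → ZMod 2) × (Fin n → ZMod 2)) :
    (LR f ∘ LR f) (ω + K) =
      (LR (conjKey f (K.1 + K.2)) ∘ LR (conjKey f K.2)) ω + (K.1 + K.2, K.1) := by
  obtain ⟨L, R⟩ := ω
  obtain ⟨KL, KR⟩ := K
  have key : ∀ x : Fin n → ZMod 2, x + x = 0 := by
    intro x; funext i; exact CharTwo.add_self_eq_zero _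
  have harg : L + (f (R + KR) + KR) + (KL + KR) = L + KL + f (R + KR) := by
    calc L + (f (R + KR) + KR) + (KL + KR)
        = L + KL + f (R + KR) + (KR + KR) := by abel
      _ = L + KL + f (R + KR) := by rw [key]; abel
  simp only [LR, conjKey, Function.comp, Prod.mk_add_mk, Prod.mk.injEq]
  refine ⟨harg.symm, ?_⟩
  rw [harg]
  calc R + KR + f (L + KL + f (R + KR))
      = R + f (L + KL + f (R + KR)) + (KL + KL) + KR := by rw [key]; abel
    _ = R + (f (L + KL + f (R + KR)) + (KL + KR)) + KL := by abel
end

section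
/- Let K_0, K_1, K_2 ∈ {0,1}^{2n} and let f_1, f_2 be permutations of {0,1}^n. Define BPEM(ω) = P_2(P_1(ω ⊕ K_0) ⊕ K_1) ⊕ K_2, where P_i = LR[f_i] ∘ LR[f_i]. Then BPEM(ω) = LR[f_1^{⊕K'_1}, f_1^{⊕K'_2}, f_2^{⊕K'_3}, f_2^{⊕K'_4}](ω) ⊕ (K'_6, K'_5), where K'_1 = (K_0)_R, K'_2 = (K_0)_R ⊕ (K_0)_L, K'_3 = (K_0)_L ⊕ (K_1)_R, K'_4 = (K_0)_R ⊕ (K_1)_R ⊕ (K_1)_L, K'_5 = (K_0)_R ⊕ (K_0)_L ⊕ (K_1)_L ⊕ (K_2)_R, and K'_6 = (K_0)_R ⊕ (K_1)_R ⊕ (K_1)_L ⊕ (K_2)_L. -/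
theorem stmt_7 (n : ℕ) (f₁ f₂ : (Fin n → ZMod 2) → (Fin n → ZMod 2))
    (hf₁ : Function.Bijective f₁) (hf₂ : Function.Bijective f₂)
    (K₀ K₁ K₂ : (Fin n → ZMod 2) × (Fin n → ZMod 2))
    (ω : (Fin n → ZMod 2) × (Fin n → ZMod 2)) :
    (LR f₂ ∘ LR f₂) ((LR f₁ ∘ LR f₁) (ω + K₀) + K₁) + K₂ =
      (LR (conjKey f₂ (K₀.2 + K₁.2 + K₁.1)) ∘ LR (conjKey f₂ (K₀.1 + K₁.2)) ∘
        LR (conjKey f₁ (K₀.2 + K₀.1)) ∘ LR (conjKey f₁ K₀.2)) ω +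
      (K₀.2 + K₁.2 + K₁.1 + K₂.1, K₀.2 + K₀.1 + K₁.1 + K₂.2) := by
  have h2 : ∀ x : Fin n → ZMod 2, x + x = 0 := fun x => by
    funext i; exact CharTwo.add_self_eq_zero (x i)
  simp only [LR, conjKey, Function.comp, Prod.mk_add_mk, Prod.fst_add, Prod.snd_add]
  abel_nf
  simp only [two_smul, two_nsmul, two_zsmul, two_mul, add_assoc, h2]
  abel_nf
  simp [two_smul, two_nsmul, two_zsmul, two_mul, h2, add_assoc]
  have h3 : ∀ x : Fin n → ZMod 2, 3 * x = x := fun x => by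
    funext i; show (3 : ZMod 2) * x i = x i
    rw [show (3 : ZMod 2) = 1 by decide, one_mul]
  simp [Prod.ext_iff, Prod.fst_add, Prod.snd_add, h3, add_assoc]
end

section
/- Let f_1, f_2 be permutations of {0,1}^n, K_0, K_1, K_2 ∈ {0,1}^{2n}, and ρ ∈ {0,1}^n. If x, y ∈ {0,1}^n satisfy x ⊕ (BPEM(x, ρ))_L = y ⊕ (BPEM(y, ρ))_L, then x = y. Here BPEM(ω) = P_2(P_1(ω ⊕ K_0) ⊕ K_1) ⊕ K_2 with P_i = LR[f_i] ∘ LR[f_i]. -/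
theorem stmt_10 (n : ℕ) (f₁ f₂ : (Fin n → ZMod 2) → (Fin n → ZMod 2))
    (hf₁ : Function.Bijective f₁) (hf₂ : Function.Bijective f₂)
    (K₀ K₁ K₂ : (Fin n → ZMod 2) × (Fin n → ZMod 2))
    (ρ x y : Fin n → ZMod 2)
    (h : x + ((LR f₂ ∘ LR f₂) ((LR f₁ ∘ LR f₁) ((x, ρ) + K₀) + K₁) + K₂).1 =
         y + ((LR f₂ ∘ LR f₂) ((LR f₁ ∘ LR f₁) ((y, ρ) + K₀) + K₁) + K₂).1) :
    x = y := by
  simp only [LR, Function.comp, Prod.fst_add, Prod.snd_add, Prod.mk_add_mk] at h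
  have key : ∀ z : Fin n → ZMod 2, z + z = 0 := fun z =>
    funext fun i => CharTwo.add_self_eq_zero (z i)
  have rearr : ∀ z w : Fin n → ZMod 2,
      z + (z + K₀.1 + f₁ (ρ + K₀.2) + K₁.1 + w + K₂.1) =
      (K₀.1 + f₁ (ρ + K₀.2) + K₁.1 + K₂.1) + w := by
    intro z w
    linear_combination key z
  rw [rearr x, rearr y] at h
  replace h := hf₂.injective (add_left_cancel h)
  replace h := hf₁.injective (add_left_cancel (add_right_cancel h))
  exact add_right_cancel (add_right_cancel h)
end

section
/- Fix ρ ∈ {0,1}^n and permutations f_1, f_2 of {0,1}^n and keys K_0, K_1, K_2 ∈ {0,1}^{2n}. Then the map x ↦ x ⊕ (BPEM(x, ρ))_L is a permutation of {0,1}^n, where BPEM(ω) = P_2(P_1(ω ⊕ K_0) ⊕ K_1) ⊕ K_2 and P_i = LR[f_i] ∘ LR[f_i]. -/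
theorem stmt_11 (n : ℕ) (f₁ f₂ : (Fin n → ZMod 2) → (Fin n → ZMod 2))
    (hf₁ : Function.Bijective f₁) (hf₂ : Function.Bijective f₂)
    (K₀ K₁ K₂ : (Fin n → ZMod 2) × (Fin n → ZMod 2))
    (ρ : Fin n → ZMod 2) :
    Function.Bijective (fun x : Fin n → ZMod 2 =>
      x + ((LR f₂ ∘ LR f₂) ((LR f₁ ∘ LR f₁) ((x, ρ) + K₀) + K₁) + K₂).1) := by
  have hself : ∀ a : Fin n → ZMod 2, a + a = 0 := by
    intro a; funext i; exact CharTwo.add_self_eq_zero _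
  have h : (fun x : Fin n → ZMod 2 =>
      x + ((LR f₂ ∘ LR f₂) ((LR f₁ ∘ LR f₁) ((x, ρ) + K₀) + K₁) + K₂).1)
      = (fun y => (K₀.1 + f₁ (ρ + K₀.2) + K₁.1 + K₂.1) + y) ∘ f₂ ∘
        (fun y => (ρ + K₀.2 + K₁.2) + y) ∘ f₁ ∘
        (fun y => y + (K₀.1 + f₁ (ρ + K₀.2))) := by
    funext x
    simp only [LR, Function.comp, Prod.fst_add, Prod.snd_add, Prod.mk_add_mk]
    have : ∀ a b : Fin n → ZMod 2, a + a + b = b := by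
      intro a b; rw [hself, zero_add]
    abel_nf
    rw [two_smul, hself x, zero_add]
  rw [h]
  exact (Equiv.addLeft _).bijective.comp (hf₂.comp ((Equiv.addLeft _).bijective.comp
    (hf₁.comp (Equiv.addRight _).bijective)))
end

section
/- Let N = 2^{2n} and M = 2^n, and let 1 ≤ q ≤ M. For a uniformly random permutation Π of {0,1}^{2n}, fix distinct inputs ω_1*ρ, ..., ω_q*ρ (all with the same right half ρ). Then the probability that the q values ω_i ⊕ (Π(ω_i*ρ))_L ∈ {0,1}^n are pairwise distinct is at most ∏_{k=1}^{q−1} (1 − k(M−1)/(N−k)) ≤ e^{−q(q−1)/(2(M+1))}. -/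
/-!
Over each injective `q`-tuple, the map `P ↦ (P (ω i, ρ))ᵢ` on permutations of a set of size
`N = M²` has exactly `(N - q)!` preimages, so the probability is at most `(N - q)! / N!` times the
number of tuples `y` with `i ↦ ω i + (y i).1` injective. Translating by `ω` is a bijection, so
there are `M (M - 1) ⋯ (M - q + 1) · M^q` such tuples, and the bound becomes
`∏_{k<q} (M - k) M / (N - k) = ∏_{k<q} (1 - k (M - 1) / (N - k))`.
For the exponential bound, `1 - x ≤ e^{-x}` and `N - k ≤ N - 1 = (M - 1)(M + 1)` give
`k (M - 1) / (N - k) ≥ k / (M + 1)`, and `∑_{k<q} k = q (q - 1) / 2`.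
-/

open Finset Function
open scoped Nat

section Counting

variable {S ι : Type*} [Fintype S] [DecidableEq S] [Fintype ι]

theorem Equiv.Perm.card_comp_eq_of_injective {g f : ι → S} (hg : Injective g)
    (hf : Injective f) :
    Fintype.card {P : Equiv.Perm S // ⇑P ∘ g = f} = (Fintype.card S - Fintype.card ι)! := by
  classical
  let e : Set.range g ≃ Set.range f :=
    (Equiv.ofInjective g hg).symm.trans (Equiv.ofInjective f hf)
  have extends_e : ∀ P : Equiv.Perm S, ⇑P ∘ g = f ↔ ∀ x : Set.range g, P x = e x := by
    intro P
    refine ⟨?_, fun h => funext fun i => by simpa [e] using h ⟨g i, i, rfl⟩⟩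
    rintro rfl ⟨_, i, rfl⟩
    simp [e]
  have card_compl : ∀ {h : ι → S}, Injective h →
      Fintype.card ↥(Set.range h)ᶜ = Fintype.card S - Fintype.card ι := fun hh => by
    rw [Fintype.card_compl_set, Set.card_range_of_injective hh]
  rw [Fintype.card_congr ((Equiv.subtypeEquivRight extends_e).trans (Equiv.Set.compl e)),
    Fintype.card_equiv (Fintype.equivOfCardEq ((card_compl hg).trans (card_compl hf).symm)),
    card_compl hg]

theorem Equiv.Perm.card_filter_comp_le [DecidableEq ι] {g : ι → S} (hg : Injective g)
    (p : (ι → S) → Prop) [DecidablePred p] :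
    #{P : Equiv.Perm S | p (P ∘ g)} ≤ (Fintype.card S - Fintype.card ι)! * #{f | p f} := by
  refine card_le_mul_card_image_of_maps_to (f := fun P : Equiv.Perm S => ⇑P ∘ g)
    (fun P hP => by simpa using hP) _ fun f _ => ?_
  by_cases hf : Injective f
  · rw [← Equiv.Perm.card_comp_eq_of_injective hg hf, Fintype.card_subtype]
    exact card_le_card fun P hP => by simp_all
  · convert Nat.zero_le _
    refine card_eq_zero.2 (filter_eq_empty_iff.2 fun P _ hP => hf ?_)
    exact hP ▸ P.injective.comp hg

end Counting

theorem card_filter_injective_add_fst {A B ι : Type*} [AddGroup A] [Fintype A] [DecidableEq A]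
    [Fintype B] [Fintype ι] [DecidableEq ι] (ω : ι → A) :
    #{f : ι → A × B | Injective fun i => ω i + (f i).1} =
      (Fintype.card A).descFactorial (Fintype.card ι) * Fintype.card B ^ Fintype.card ι := by
  rw [← Fintype.card_embedding_eq, ← Fintype.card_fun, ← Fintype.card_prod,
    ← Fintype.card_subtype]
  refine Fintype.card_congr
    { toFun := fun f => (⟨fun i => ω i + (f.1 i).1, f.2⟩, fun i => (f.1 i).2)
      invFun := fun x => ⟨fun i => (-ω i + x.1 i, x.2 i), by simpa using x.1.injective⟩
      left_inv := fun f => by ext <;> simp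
      right_inv := fun x => by ext <;> simp }

theorem Nat.cast_descFactorial_eq_prod_range {R : Type*} [CommRing R] (n k : ℕ) :
    (n.descFactorial k : R) = ∏ i ∈ range k, ((n : R) - i) := by
  induction k with
  | zero => simp
  | succ k ih =>
    rw [Nat.descFactorial_succ, prod_range_succ, Nat.cast_mul, ih, mul_comm]
    rcases le_or_gt k n with hkn | hnk
    · rw [Nat.cast_sub hkn]
    · rw [← ih, Nat.descFactorial_eq_zero_iff_lt.2 hnk]; simp

theorem card_filter_perm_injective_add_fst_div_le {A B ι : Type*} [AddGroup A] [Fintype A]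
    [DecidableEq A] [Fintype B] [DecidableEq B] [Fintype ι] [DecidableEq ι]
    {ω : ι → A} (hω : Injective ω) (ρ : B) :
    (#{P : Equiv.Perm (A × B) | Injective fun i => ω i + (P (ω i, ρ)).1} : ℝ) /
        Fintype.card (Equiv.Perm (A × B)) ≤
      ((Fintype.card A).descFactorial (Fintype.card ι) * Fintype.card B ^ Fintype.card ι : ℕ) /
        (Fintype.card A * Fintype.card B).descFactorial (Fintype.card ι) := by
  have hg : Injective fun i => (ω i, ρ) := fun i j h => hω (congrArg Prod.fst h)
  have hcount := Equiv.Perm.card_filter_comp_le hg fun f => Injective fun i => ω i + (f i).1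
  rw [card_filter_injective_add_fst, Fintype.card_prod] at hcount
  have hle : Fintype.card ι ≤ Fintype.card A * Fintype.card B :=
    Fintype.card_prod A B ▸ Fintype.card_le_of_injective _ hg
  set N := Fintype.card A * Fintype.card B
  set q := Fintype.card ι
  set c := (Fintype.card A).descFactorial q * Fintype.card B ^ q
  have hfact : ((N - q)! : ℝ) ≠ 0 := by positivity
  rw [Fintype.card_perm, Fintype.card_prod, ← Nat.factorial_mul_descFactorial hle, Nat.cast_mul]
  calc _ ≤ ((N - q)! * c : ℕ) / ((N - q)! * N.descFactorial q : ℝ) := by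
        gcongr
        exact_mod_cast hcount
    _ = _ := by rw [Nat.cast_mul, mul_div_mul_left _ _ hfact]

theorem descFactorial_mul_pow_div_descFactorial_sq {M q : ℕ} (hq : q ≤ M) :
    ((M.descFactorial q * M ^ q : ℕ) : ℝ) / (M * M).descFactorial q =
      ∏ k ∈ range q, (1 - k * ((M : ℝ) - 1) / ((M : ℝ) ^ 2 - k)) := by
  rw [Nat.cast_mul, Nat.cast_descFactorial_eq_prod_range, Nat.cast_descFactorial_eq_prod_range,
    Nat.cast_pow, ← card_range q, ← prod_const, card_range, ← prod_mul_distrib,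
    ← prod_div_distrib]
  refine prod_congr rfl fun k hk => ?_
  have hkM : (k : ℝ) + 1 ≤ M := by exact_mod_cast (mem_range.1 hk).trans_le hq
  have hpos : (0 : ℝ) < M ^ 2 - k := by nlinarith
  push_cast
  field_simp
  ring

theorem one_sub_mul_div_sq_sub_nonneg {M : ℝ} {k : ℕ} (hk : (k : ℝ) + 1 ≤ M) :
    0 ≤ 1 - k * (M - 1) / (M ^ 2 - k) := by
  have hpos : (0 : ℝ) < M ^ 2 - k := by nlinarith
  rw [sub_nonneg, div_le_one hpos]
  nlinarith

theorem one_sub_mul_div_sq_sub_le_exp {M : ℝ} {k : ℕ} (hk : (k : ℝ) + 1 ≤ M) :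
    1 - k * (M - 1) / (M ^ 2 - k) ≤ Real.exp (-(k / (M + 1))) := by
  have hpos : (0 : ℝ) < M ^ 2 - k := by nlinarith
  have hkk : (k : ℝ) ≤ k ^ 2 := by
    rcases k.eq_zero_or_pos with rfl | hk1
    · simp
    · nlinarith [(Nat.one_le_cast (α := ℝ)).2 hk1]
  refine (Real.one_sub_le_exp_neg _).trans (Real.exp_le_exp.2 (neg_le_neg ?_))
  rw [div_le_div_iff₀ (by linarith) hpos]
  nlinarith

theorem prod_range_one_sub_mul_div_sq_sub_le_exp {M : ℝ} {q : ℕ} (hq : (q : ℝ) ≤ M) :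
    ∏ k ∈ range q, (1 - k * (M - 1) / (M ^ 2 - k)) ≤
      Real.exp (-(q * (q - 1) : ℝ) / (2 * (M + 1))) := by
  have hk : ∀ k ∈ range q, (k : ℝ) + 1 ≤ M := fun k hk =>
    le_trans (by exact_mod_cast mem_range.1 hk) hq
  have gauss : ∀ m : ℕ, ∑ k ∈ range m, (k : ℝ) = m * (m - 1) / 2 := fun m => by
    induction m with
    | zero => simp
    | succ m ih => rw [sum_range_succ, ih]; push_cast; ring
  calc ∏ k ∈ range q, (1 - k * (M - 1) / (M ^ 2 - k))
      ≤ ∏ k ∈ range q, Real.exp (-(k / (M + 1))) :=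
        prod_le_prod (fun k hk' => one_sub_mul_div_sq_sub_nonneg (hk k hk'))
          fun k hk' => one_sub_mul_div_sq_sub_le_exp (hk k hk')
    _ = Real.exp (-(q * (q - 1) : ℝ) / (2 * (M + 1))) := by
        rw [← Real.exp_sum, sum_neg_distrib, ← sum_div, gauss, neg_div, div_div]

theorem prod_Icc_one_pred_eq_prod_range {M : Type*} [CommMonoid M] {f : ℕ → M} (h0 : f 0 = 1)
    (q : ℕ) : ∏ k ∈ Icc 1 (q - 1), f k = ∏ k ∈ range q, f k := by
  cases q with
  | zero => simp
  | succ q =>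
    rw [prod_range_succ', h0, mul_one, add_tsub_cancel_right, ← Ico_add_one_right_eq_Icc,
      prod_Ico_eq_prod_range]
    simp [add_comm]

theorem stmt_16_general (n q : ℕ) (hqM : q ≤ 2 ^ n)
    (ρ : Fin n → ZMod 2) (ω : Fin q → (Fin n → ZMod 2)) (hω : Function.Injective ω) :
    ((Finset.univ.filter (fun P : Equiv.Perm ((Fin n → ZMod 2) × (Fin n → ZMod 2)) =>
        Function.Injective (fun i : Fin q => ω i + (P (ω i, ρ)).1))).card : ℝ) /
        (Fintype.card (Equiv.Perm ((Fin n → ZMod 2) × (Fin n → ZMod 2)))) ≤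
      ∏ k ∈ Finset.Icc 1 (q - 1),
        (1 - (k : ℝ) * ((2 ^ n : ℝ) - 1) / ((2 ^ (2 * n) : ℝ) - k)) ∧
    ∏ k ∈ Finset.Icc 1 (q - 1),
        (1 - (k : ℝ) * ((2 ^ n : ℝ) - 1) / ((2 ^ (2 * n) : ℝ) - k)) ≤
      Real.exp (-(q * (q - 1) : ℝ) / (2 * ((2 ^ n : ℝ) + 1))) := by
  have hcard : Fintype.card (Fin n → ZMod 2) = 2 ^ n := by simp
  have hN : (2 : ℝ) ^ (2 * n) = ((2 : ℝ) ^ n) ^ 2 := by ring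
  rw [hN, prod_Icc_one_pred_eq_prod_range (by simp)]
  refine ⟨?_, prod_range_one_sub_mul_div_sq_sub_le_exp (by exact_mod_cast hqM)⟩
  calc _ ≤ _ := card_filter_perm_injective_add_fst_div_le hω ρ
    _ = _ := by
      rw [hcard, Fintype.card_fin, descFactorial_mul_pow_div_descFactorial_sq hqM]
      norm_num

theorem stmt_16 (n q : ℕ) (hq1 : 1 ≤ q) (hqM : q ≤ 2 ^ n)
    (ρ : Fin n → ZMod 2) (ω : Fin q → (Fin n → ZMod 2)) (hω : Function.Injective ω) :
    ((Finset.univ.filter (fun P : Equiv.Perm ((Fin n → ZMod 2) × (Fin n → ZMod 2)) =>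
        Function.Injective (fun i : Fin q => ω i + (P (ω i, ρ)).1))).card : ℝ) /
        (Fintype.card (Equiv.Perm ((Fin n → ZMod 2) × (Fin n → ZMod 2)))) ≤
      ∏ k ∈ Finset.Icc 1 (q - 1),
        (1 - (k : ℝ) * ((2 ^ n : ℝ) - 1) / ((2 ^ (2 * n) : ℝ) - k)) ∧
    ∏ k ∈ Finset.Icc 1 (q - 1),
        (1 - (k : ℝ) * ((2 ^ n : ℝ) - 1) / ((2 ^ (2 * n) : ℝ) - k)) ≤
      Real.exp (-(q * (q - 1) : ℝ) / (2 * ((2 ^ n : ℝ) + 1))) :=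
  stmt_16_general n q hqM ρ ω hω
end

section
/- Let f be a permutation of {0,1}^n, K_0, K_1 ∈ {0,1}^{2n}, and define the 1-round BPEM cipher E(m) = (LR[f] ∘ LR[f])(m ⊕ K_0) ⊕ K_1. Then for all plaintexts m_1, m_2 ∈ {0,1}^{2n} with (m_1)_R = (m_2)_R, we have (E(m_1) ⊕ E(m_2))_L = (m_1 ⊕ m_2)_L. -/
theorem stmt_18 (n : ℕ) (f : (Fin n → ZMod 2) → (Fin n → ZMod 2))
    (hf : Function.Bijective f)
    (K₀ K₁ : (Fin n → ZMod 2) × (Fin n → ZMod 2))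
    (m₁ m₂ : (Fin n → ZMod 2) × (Fin n → ZMod 2)) (hR : m₁.2 = m₂.2) :
    (((LR f ∘ LR f) (m₁ + K₀) + K₁) + ((LR f ∘ LR f) (m₂ + K₀) + K₁)).1 =
      (m₁ + m₂).1 := by
  simp only [LR, Function.comp, Prod.fst_add, Prod.snd_add, hR]
  funext i
  simp only [Pi.add_apply]
  ring_nf
  rw [show ((2:ZMod 2) = 0) by decide]
  ring
end
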